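/- Let d ≥ 1, fix v ∈ ℝ^d with ‖v‖₂ = 1 and w = (w₁,w₂) ∈ ℝ² with w₁² + w₂² = 1, and set P_{v,w}(μ,Σ) = w₁⟨v,μ⟩ + w₂·log √(vᵀΣv). Then for all μ₁, μ₀ ∈ ℝ^d and all real symmetric positive definite d×d matrices Σ₁, Σ₀: |P_{v,w}(μ₁,Σ₁) − P_{v,w}(μ₀,Σ₀)| ≤ sqrt( ‖μ₁ − μ₀‖₂² + (1/4)·L(Σ₁,Σ₀)² ), where L(Σ₁,Σ₀) = sup over u ∈ ℝ^d with ‖u‖₂ = 1 of |log( (uᵀΣ₁u) / (uᵀΣ₀u) )|. -/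

import Mathlib

open MeasureTheory ProbabilityTheory Matrix ENNReal
open scoped RealInnerProductSpace

noncomputable section

namespace PaperSOT

/-- `ℝ^d` with the Euclidean norm. -/
abbrev E (d : ℕ) := EuclideanSpace ℝ (Fin d)

/-- real `d × d` matrices. -/
abbrev Mat (d : ℕ) := Matrix (Fin d) (Fin d) ℝ

instance (d : ℕ) : MeasurableSpace (Mat d) :=
  (inferInstance : MeasurableSpace (Fin d → Fin d → ℝ))

/-- squared Frobenius norm `‖A‖_F² = Tr(Aᵀ A)`. -/
def frobSq {d : ℕ} (A : Mat d) : ℝ := (Aᵀ * A).trace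

/-- Frobenius norm `‖A‖_F = sqrt (Tr (Aᵀ A))`. -/
def frobNorm {d : ℕ} (A : Mat d) : ℝ := Real.sqrt (frobSq A)

/-- the (unique, when it exists) symmetric logarithm of a matrix: for a symmetric
positive definite `Σ` this is the unique symmetric `S` with `exp S = Σ`. -/
def symLog {d : ℕ} (M : Mat d) : Mat d := by
  classical exact if h : ∃ S : Mat d, S.IsSymm ∧ NormedSpace.exp S = M then h.choose else 0

/-- `π` is a coupling of `μ` and `ν`: its marginals are `μ` and `ν`. -/
def IsCoupling {X Y : Type*} [MeasurableSpace X] [MeasurableSpace Y]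
    (π : Measure (X × Y)) (μ : Measure X) (ν : Measure Y) : Prop :=
  π.map Prod.fst = μ ∧ π.map Prod.snd = ν

/-- the Wasserstein-`p` cost `W_p^p` between two measures on `ℝ`:
the infimum over couplings of `∫ |x-y|^p dπ`. -/
def Wp (p : ℝ) (ν₁ ν₂ : Measure ℝ) : ℝ≥0∞ :=
  ⨅ (π : Measure (ℝ × ℝ)) (_ : IsCoupling π ν₁ ν₂),
    ∫⁻ z, ENNReal.ofReal (|z.1 - z.2| ^ p) ∂π

/-- the standard Gaussian measure on `ℝ^d`. -/
def stdGaussianE (d : ℕ) : Measure (E d) :=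
  (Measure.pi fun _ : Fin d => gaussianReal 0 1).map
    (MeasurableEquiv.toLp 2 (Fin d → ℝ))

/-- the uniform probability distribution on the unit sphere of `ℝ^d`,
realized as the law of a normalized standard Gaussian vector. -/
def unifSphere (d : ℕ) : Measure (E d) :=
  (stdGaussianE d).map (fun x => ‖x‖⁻¹ • x)

/-- the standard Gaussian measure on `d × d` matrices (i.i.d. standard normal entries). -/
def stdGaussianMat (d : ℕ) : Measure (Mat d) :=
  (Measure.pi fun _ : Fin d => Measure.pi fun _ : Fin d => gaussianReal 0 1 :
    Measure (Fin d → Fin d → ℝ)).map (fun g => (Matrix.of g : Mat d))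

/-- the uniform probability distribution on the unit Frobenius sphere of the space of
real symmetric `d × d` matrices, realized as the law of a Frobenius-normalized isotropic
Gaussian symmetric matrix. -/
def unifSymSphere (d : ℕ) : Measure (Mat d) :=
  (stdGaussianMat d).map (fun g =>
    (frobNorm ((2:ℝ)⁻¹ • (g + gᵀ)))⁻¹ • ((2:ℝ)⁻¹ • (g + gᵀ)))

/-- the space `S_d^{++}(ℝ)` of real symmetric positive definite `d × d` matrices. -/
abbrev PDMat (d : ℕ) := {M : Mat d // M.PosDef}

/-- the quadratic form `vᵀ M v`. -/
def quad {d : ℕ} (v : E d) (M : Mat d) : ℝ := ∑ i, ∑ j, v i * M i j * v j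

/-- the generalized geodesic projection
`P_{V_w}(μ, Σ) = w₁ ⟨μ, v⟩ + w₂ Tr(A log Σ)` on `ℝ^d × S_d^{++}(ℝ)`. -/
def projMix {d : ℕ} (w : E 2) (v : E d) (A : Mat d) (x : E d × PDMat d) : ℝ :=
  w 0 * ⟪x.1, v⟫ + w 1 * (A * symLog x.2.1).trace

/-- the mixed sliced Wasserstein distance (raised to the power `p`),
`Mix-SW_p^p(G₁,G₂) = ∫ W_p^p(P_{V_w}♯G₁, P_{V_w}♯G₂) dσ(w,v,A)`, where `σ` is the product
of the uniform distributions on the unit circle, the unit sphere of `ℝ^d` and the unit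
Frobenius sphere of symmetric `d × d` matrices. -/
def MixSW (d : ℕ) (p : ℝ) (G₁ G₂ : Measure (E d × PDMat d)) : ℝ≥0∞ :=
  ∫⁻ w, ∫⁻ v, ∫⁻ A,
      Wp p (G₁.map (projMix w v A)) (G₂.map (projMix w v A))
    ∂(unifSymSphere d) ∂(unifSphere d) ∂(unifSphere 2)

/-- the log-Euclidean distance
`d((μ₁,Σ₁),(μ₂,Σ₂)) = sqrt(‖μ₁-μ₂‖² + ‖log Σ₁ - log Σ₂‖_F²)` on `ℝ^d × S_d^{++}(ℝ)`. -/
def dLE {d : ℕ} (x y : E d × PDMat d) : ℝ :=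
  Real.sqrt (‖x.1 - y.1‖ ^ 2 + frobSq (symLog x.2.1 - symLog y.2.1))

/-- the projection `P_{v,w}(μ,Σ) = w₁ ⟨v,μ⟩ + w₂ log √(vᵀ Σ v)` used by the sliced
mixture Wasserstein distance. -/
def projSMix {d : ℕ} (w : E 2) (v : E d) (x : E d × PDMat d) : ℝ :=
  w 0 * ⟪v, x.1⟫ + w 1 * Real.log (Real.sqrt (quad v x.2.1))

/-- the sliced mixture Wasserstein distance (raised to the power `p`),
`SMix-W_p^p(G₁,G₂) = ∫ W_p^p(P_{v,w}♯G₁, P_{v,w}♯G₂) dσ(w,v)`, where `σ` is the product of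
the uniform distributions on the unit circle and on the unit sphere of `ℝ^d`. -/
def SMixW (d : ℕ) (p : ℝ) (G₁ G₂ : Measure (E d × PDMat d)) : ℝ≥0∞ :=
  ∫⁻ w, ∫⁻ v,
      Wp p (G₁.map (projSMix w v)) (G₂.map (projSMix w v))
    ∂(unifSphere d) ∂(unifSphere 2)

/-- the symmetrized log-Rayleigh quantity
`L(Σ₁,Σ₂) = sup_{‖u‖=1} |log (uᵀΣ₁u / uᵀΣ₂u)|`. -/
def logRayleigh {d : ℕ} (S₁ S₂ : Mat d) : ℝ :=
  sSup {r : ℝ | ∃ u : E d, ‖u‖ = 1 ∧ r = |Real.log (quad u S₁ / quad u S₂)|}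

/-- the distance `d_S((μ₁,Σ₁),(μ₂,Σ₂)) = sqrt(‖μ₁-μ₂‖² + (1/4) L(Σ₁,Σ₂)²)`. -/
def dS {d : ℕ} (x y : E d × PDMat d) : ℝ :=
  Real.sqrt (‖x.1 - y.1‖ ^ 2 + (1/4) * (logRayleigh x.2.1 y.2.1) ^ 2)

/-- a measure is finitely supported if some finite set has full measure. -/
def FinSupp {X : Type*} [MeasurableSpace X] (G : Measure X) : Prop :=
  ∃ s : Finset X, G (↑s : Set X)ᶜ = 0

/-- the square root of a positive semidefinite matrix, as `Matrix.PosSemidef.sqrt` was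
defined in the older Mathlib (removed since). -/
noncomputable def _root_.Matrix.PosSemidef.sqrt {n : Type*} [Fintype n] [DecidableEq n]
    {A : Matrix n n ℝ} (hA : A.PosSemidef) : Matrix n n ℝ :=
  hA.1.eigenvectorUnitary.1 * diagonal ((↑) ∘ Real.sqrt ∘ hA.1.eigenvalues) *
    (star hA.1.eigenvectorUnitary : Matrix n n ℝ)

/-- the Gaussian measure `N(m, Σ)` on `ℝ^d` (with `Σ` positive semidefinite), realized as
the law of `m + Σ^{1/2} Z` for a standard Gaussian vector `Z`. -/
def gaussianE {d : ℕ} (m : E d) {S : Mat d} (hS : S.PosSemidef) : Measure (E d) :=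
  (stdGaussianE d).map (fun x =>
    m + (MeasurableEquiv.toLp 2 (Fin d → ℝ)) (hS.sqrt.mulVec (fun i => x i)))

lemma quad_pos {d : ℕ} {S : Mat d} (hS : S.PosDef) {u : E d} (hu : u ≠ 0) :
    0 < quad u S := by
  have hne : (fun i => u i) ≠ 0 := by
    intro h; apply hu; ext i; exact congrFun h i
  have := (Matrix.posDef_iff_dotProduct_mulVec.mp hS).2 hne
  simpa [quad, dotProduct, Matrix.mulVec, Finset.mul_sum, mul_assoc] using this

lemma continuous_quad {d : ℕ} (S : Mat d) : Continuous fun u : E d => quad u S := by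
  unfold quad
  fun_prop

lemma logRayleigh_bdd {d : ℕ} {S₁ S₀ : Mat d} (h₁ : S₁.PosDef) (h₀ : S₀.PosDef) :
    BddAbove {r : ℝ | ∃ u : E d, ‖u‖ = 1 ∧ r = |Real.log (quad u S₁ / quad u S₀)|} := by
  have hset : {r : ℝ | ∃ u : E d, ‖u‖ = 1 ∧ r = |Real.log (quad u S₁ / quad u S₀)|}
      = (fun u : E d => |Real.log (quad u S₁ / quad u S₀)|) '' Metric.sphere 0 1 := by
    ext r
    simp only [Set.mem_setOf_eq, Set.mem_image, mem_sphere_zero_iff_norm]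
    constructor
    · rintro ⟨u, hu, rfl⟩; exact ⟨u, hu, rfl⟩
    · rintro ⟨u, hu, rfl⟩; exact ⟨u, hu, rfl⟩
  rw [hset]
  apply IsCompact.bddAbove
  apply (isCompact_sphere (0 : E d) 1).image_of_continuousOn
  intro u hu
  have hu' : u ≠ 0 := by
    rw [mem_sphere_zero_iff_norm] at hu
    intro h; rw [h, norm_zero] at hu; norm_num at hu
  apply ContinuousAt.continuousWithinAt
  apply ContinuousAt.abs
  have hne : quad u S₁ / quad u S₀ ≠ 0 :=
    ne_of_gt (div_pos (quad_pos h₁ hu') (quad_pos h₀ hu'))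
  have hdiv : ContinuousAt (fun u : E d => quad u S₁ / quad u S₀) u :=
    ((continuous_quad S₁).continuousAt).div ((continuous_quad S₀).continuousAt)
      (ne_of_gt (quad_pos h₀ hu'))
  exact hdiv.log hne

/-- per-slice Lipschitz-type estimate in the proof of Proposition 3 of
the paper: `|P_{v,w}(μ₁,Σ₁) - P_{v,w}(μ₀,Σ₀)| ≤ sqrt(‖μ₁-μ₀‖² + (1/4) L(Σ₁,Σ₀)²)`. -/
theorem statement13 (d : ℕ) (hd : 1 ≤ d) (v : E d) (hv : ‖v‖ = 1)
    (w₁ w₂ : ℝ) (hw : w₁ ^ 2 + w₂ ^ 2 = 1)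
    (μ₁ μ₀ : E d) (S₁ S₀ : Mat d) (h₁ : S₁.PosDef) (h₀ : S₀.PosDef) :
    |(w₁ * ⟪v, μ₁⟫ + w₂ * Real.log (Real.sqrt (quad v S₁))) -
        (w₁ * ⟪v, μ₀⟫ + w₂ * Real.log (Real.sqrt (quad v S₀)))| ≤
      Real.sqrt (‖μ₁ - μ₀‖ ^ 2 + (1 / 4) * logRayleigh S₁ S₀ ^ 2) := by
  have hvne : v ≠ 0 := by
    intro h; rw [h, norm_zero] at hv; norm_num at hv
  have hq₁ := quad_pos h₁ hvne
  have hq₀ := quad_pos h₀ hvne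
  set l := Real.log (quad v S₁ / quad v S₀) with hl
  have hL : |l| ≤ logRayleigh S₁ S₀ :=
    le_csSup (logRayleigh_bdd h₁ h₀) ⟨v, hv, rfl⟩
  set a := ⟪v, μ₁ - μ₀⟫ with hadef
  set b := Real.log (Real.sqrt (quad v S₁)) - Real.log (Real.sqrt (quad v S₀)) with hbdef
  have hb : b = (1/2) * l := by
    rw [hbdef, hl, Real.log_sqrt hq₁.le, Real.log_sqrt hq₀.le,
      Real.log_div hq₁.ne' hq₀.ne']
    ring
  have ha : |a| ≤ ‖μ₁ - μ₀‖ := by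
    have := abs_real_inner_le_norm v (μ₁ - μ₀)
    simpa [hv] using this
  have hX : (w₁ * ⟪v, μ₁⟫ + w₂ * Real.log (Real.sqrt (quad v S₁))) -
      (w₁ * ⟪v, μ₀⟫ + w₂ * Real.log (Real.sqrt (quad v S₀))) = w₁ * a + w₂ * b := by
    rw [hadef, hbdef, inner_sub_right]; ring
  rw [hX]
  clear_value l a b
  have hsq : (w₁ * a + w₂ * b) ^ 2 ≤ ‖μ₁ - μ₀‖ ^ 2 + (1/4) * logRayleigh S₁ S₀ ^ 2 := by
    have h1 : (w₁ * a + w₂ * b) ^ 2 ≤ (w₁ ^ 2 + w₂ ^ 2) * (a ^ 2 + b ^ 2) := by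
      nlinarith [sq_nonneg (w₁ * b - w₂ * a)]
    have ha2 : a ^ 2 ≤ ‖μ₁ - μ₀‖ ^ 2 := by
      nlinarith [abs_nonneg a, sq_abs a]
    have hb2 : b ^ 2 ≤ (1/4) * logRayleigh S₁ S₀ ^ 2 := by
      rw [hb]
      nlinarith [abs_nonneg l, sq_abs l]
    rw [hw, one_mul] at h1
    linarith
  calc |w₁ * a + w₂ * b| = Real.sqrt ((w₁ * a + w₂ * b) ^ 2) :=
        (Real.sqrt_sq_eq_abs _).symm
    _ ≤ _ := Real.sqrt_le_sqrt hsq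

end PaperSOT
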